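/- (Equilibria lie in the consensus box without antagonism) Suppose a_{ik} ≥ 0 for all i,k (no antagonistic relations). Let m_min := min_i m_i and m_max := max_i m_i. Then every equilibrium point z* ∈ ℝⁿ of the opinion dynamics (f(z*) = 0) satisfies m_min ≤ z*_i ≤ m_max for all i ∈ {1,…,n}. -/

import Mathlib

/-!
At an equilibrium, look at an agent whose opinion is maximal. With non-negative influence weights
every coupling term `a_{ik} r_k / B (z_k - z_i)` is non-positive there, so the self function of that
agent is non-negative at its opinion. The self function is strictly decreasing, hence the opinion
is at most the agent's root `m_i ≤ m_max`, and it bounds every other opinion. The lower bound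
follows by the symmetry `z ↦ -z`, `p ↦ -p`, under which the dynamics are odd.
-/

noncomputable def selfFunction (c p r x : ℝ) : ℝ := -c * (x - p) - x ^ 3 / r

lemma selfFunction_neg (c p r x : ℝ) :
    selfFunction c (-p) r (-x) = -selfFunction c p r x := by
  unfold selfFunction
  ring

lemma strictAnti_selfFunction {c r : ℝ} (hc : 0 ≤ c) (hr : 0 < r) (p : ℝ) :
    StrictAnti (selfFunction c p r) := by
  have hcube : StrictAnti fun x : ℝ => -(x ^ 3 / r) :=
    ((Odd.strictMono_pow (by decide : Odd 3)).div_const hr).neg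
  have hlin : Antitone fun x : ℝ => -c * (x - p) := fun x y hxy => by nlinarith
  exact hlin.add_strictAnti hcube

lemma le_of_selfFunction_nonneg {c p r x m : ℝ} (hc : 0 ≤ c) (hr : 0 < r)
    (hx : 0 ≤ selfFunction c p r x) (hm : selfFunction c p r m = 0) : x ≤ m :=
  (strictAnti_selfFunction hc hr p).le_iff_ge.mp (hm ▸ hx)

section CoupledField

variable {ι : Type*} [Fintype ι]

/-- The opinion dynamics `f` is the case `cᵢ = wᵢ rᵢ / B`, `bᵢₖ = aᵢₖ rₖ / B`. -/
noncomputable def coupledField (c p r : ι → ℝ) (b : ι → ι → ℝ) (z : ι → ℝ)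
    (i : ι) : ℝ :=
  selfFunction (c i) (p i) (r i) (z i) + ∑ k, b i k * (z k - z i)

lemma coupledField_neg (c p r : ι → ℝ) (b : ι → ι → ℝ) (z : ι → ℝ) (i : ι) :
    coupledField c (-p) r b (-z) i = -coupledField c p r b z i := by
  simp only [coupledField, Pi.neg_apply, selfFunction_neg, neg_sub_neg, neg_add,
    ← Finset.sum_neg_distrib, ← mul_neg, neg_sub]

variable {c p r m z : ι → ℝ} {b : ι → ι → ℝ} {i : ι}

lemma le_root_of_forall_le (hz : coupledField c p r b z i = 0)
    (hm : selfFunction (c i) (p i) (r i) (m i) = 0) (hc : 0 ≤ c i) (hr : 0 < r i)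
    (hb : ∀ k, 0 ≤ b i k) (hmax : ∀ k, z k ≤ z i) : z i ≤ m i := by
  have hcoupling : ∑ k, b i k * (z k - z i) ≤ 0 :=
    Finset.sum_nonpos fun k _ => mul_nonpos_of_nonneg_of_nonpos (hb k) (by linarith [hmax k])
  refine le_of_selfFunction_nonneg hc hr ?_ hm
  rw [coupledField] at hz
  linarith

lemma root_le_of_forall_ge (hz : coupledField c p r b z i = 0)
    (hm : selfFunction (c i) (p i) (r i) (m i) = 0) (hc : 0 ≤ c i) (hr : 0 < r i)
    (hb : ∀ k, 0 ≤ b i k) (hmin : ∀ k, z i ≤ z k) : m i ≤ z i := by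
  have hm' : selfFunction (c i) ((-p) i) (r i) ((-m) i) = 0 := by
    simp only [Pi.neg_apply, selfFunction_neg, hm, neg_zero]
  have hz' : coupledField c (-p) r b (-z) i = 0 := by rw [coupledField_neg, hz, neg_zero]
  have := le_root_of_forall_le hz' hm' hc hr hb fun k => neg_le_neg (hmin k)
  simpa only [Pi.neg_apply, neg_le_neg_iff] using this

end CoupledField

theorem equilibria_in_consensus_box_general
    (n : ℕ) (p w r : Fin n → ℝ) (a : Fin n → Fin n → ℝ)
    (hw : ∀ i, 0 < w i) (hr : ∀ i, 0 < r i)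
    (B : ℝ) (hB : B = ∑ k, r k)
    (hpos : ∀ i k, 0 ≤ a i k)
    (f : (Fin n → ℝ) → Fin n → ℝ)
    (hf : ∀ z i, f z i =
      -(w i * r i / B) * (z i - p i) + (∑ k, (a i k * r k / B) * (z k - z i))
        - (z i) ^ 3 / r i)
    (m : Fin n → ℝ)
    (hm : ∀ i, -(w i * r i / B) * (m i - p i) - (m i) ^ 3 / r i = 0)
    (zstar : Fin n → ℝ) (heq : f zstar = 0) :
    ∀ i, (⨅ j, m j) ≤ zstar i ∧ zstar i ≤ ⨆ j, m j := by
  intro i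
  have : Nonempty (Fin n) := ⟨i⟩
  have hBpos : 0 < B := hB ▸ Finset.sum_pos (fun k _ => hr k) Finset.univ_nonempty
  have hc j : 0 ≤ w j * r j / B := by have := hw j; have := hr j; positivity
  have hb j k : 0 ≤ a j k * r k / B := by have := hpos j k; have := hr k; positivity
  have hz j :
      coupledField (fun j => w j * r j / B) p r (fun j k => a j k * r k / B) zstar j = 0 := by
    have hfj := congrFun heq j
    rw [hf, Pi.zero_apply] at hfj
    simp only [coupledField, selfFunction]
    linear_combination hfj
  obtain ⟨imin, himin⟩ := Finite.exists_min zstar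
  obtain ⟨imax, himax⟩ := Finite.exists_max zstar
  have hlo := root_le_of_forall_ge (hz imin) (hm imin) (hc imin) (hr imin) (hb imin) himin
  have hup := le_root_of_forall_le (hz imax) (hm imax) (hc imax) (hr imax) (hb imax) himax
  exact ⟨((ciInf_le (Finite.bddBelow_range m) imin).trans hlo).trans (himin i),
    ((himax i).trans hup).trans (le_ciSup (Finite.bddAbove_range m) imax)⟩

/-- In the absence of antagonistic relations, every equilibrium point of the opinion
dynamics lies in the consensus box `[m_min, m_max]ⁿ`. -/
theorem equilibria_in_consensus_box
    (n : ℕ) (hn : 0 < n) (p w r : Fin n → ℝ) (a : Fin n → Fin n → ℝ)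
    (hw : ∀ i, 0 < w i) (hr : ∀ i, 0 < r i)
    (B : ℝ) (hB : B = ∑ k, r k)
    (hpos : ∀ i k, 0 ≤ a i k)
    (f : (Fin n → ℝ) → Fin n → ℝ)
    (hf : ∀ z i, f z i =
      -(w i * r i / B) * (z i - p i) + (∑ k, (a i k * r k / B) * (z k - z i))
        - (z i) ^ 3 / r i)
    (m : Fin n → ℝ)
    (hm : ∀ i, -(w i * r i / B) * (m i - p i) - (m i) ^ 3 / r i = 0)
    (zstar : Fin n → ℝ) (heq : f zstar = 0) :
    ∀ i, (⨅ j, m j) ≤ zstar i ∧ zstar i ≤ ⨆ j, m j :=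
  equilibria_in_consensus_box_general n p w r a hw hr B hB hpos f hf m hm zstar heq
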